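/- Let λ > -1/2, -1 < s < 1, and k ≥ 2. Then ∫_{-1}^{s} (s-x)(1-x²)^{λ-1/2} C_k^λ(x) dx = ∫_{s}^{1} (x-s)(1-x²)^{λ-1/2} C_k^λ(x) dx = (4λ(λ+1)/((k-1)k(k+2λ)(k+2λ+1))) (1-s²)^{λ+3/2} C_{k-2}^{λ+2}(s). -/

import Mathlib

open scoped Real BigOperators

/-- Pochhammer symbol `(lam)_m`. -/
noncomputable def poch (lam : ℝ) (m : ℕ) : ℝ := (ascPochhammer ℝ m).eval lam

/-- Gegenbauer polynomial `C_k^lam(x)`, via its explicit representation. -/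
noncomputable def gegen (lam : ℝ) (k : ℕ) (x : ℝ) : ℝ :=
  ∑ j ∈ Finset.range (k / 2 + 1),
    (-1 : ℝ) ^ j * poch lam (k - j) / ((Nat.factorial j : ℝ) * (Nat.factorial (k - 2 * j) : ℝ))
      * (2 * x) ^ (k - 2 * j)

/-!
The identity
`d/dx [(1 - x²)^(λ+1/2) C_m^(λ+1)(x)] = -((m+1)(m+1+2λ)/(2λ)) (1 - x²)^(λ-1/2) C_(m+1)^λ(x)`
is a comparison of coefficients in the explicit sum for `C^λ`. Used for `(λ, k - 1)` and for
`(λ + 1, k - 2)`, it performs both integrations by parts at once: it gives an explicit primitive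
`Φ` of `(s - x) (1 - x²)^(λ-1/2) C_k^λ(x)` on `(-1, 1)`. Since `λ > -1/2`, `Φ` is continuous on
`[-1, 1]` and vanishes at `±1`, and the integrand is integrable, so both one-sided integrals equal
`Φ(s)`.
-/

open Finset MeasureTheory intervalIntegral

lemma poch_succ (lam : ℝ) (n : ℕ) : poch lam (n + 1) = poch lam n * (lam + n) :=
  ascPochhammer_succ_eval n lam

lemma poch_succ_left (lam : ℝ) (n : ℕ) : poch lam (n + 1) = lam * poch (lam + 1) n := by
  simp [poch, ascPochhammer_succ_left, Polynomial.eval_comp]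

lemma Finset.sum_range_succ_sub_shift {M : Type*} [AddCommGroup M] (A B C : ℕ → M) (n : ℕ)
    (hA : A n = 0) (h₀ : -B 0 = C 0) (hshift : ∀ j < n, A j - B (j + 1) = C (j + 1)) :
    ∑ j ∈ range (n + 1), (A j - B j) = ∑ j ∈ range (n + 1), C j := by
  rw [sum_sub_distrib, sum_range_succ A, hA, add_zero, sum_range_succ' B, sum_range_succ' C,
    ← h₀, sub_add_eq_sub_sub, ← sum_sub_distrib, sub_eq_add_neg]
  exact congrArg (· + _) (sum_congr rfl fun j hj => hshift j (mem_range.mp hj))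

/-- Extended by zero beyond `j = m / 2`, so that the sum for `gegen` may run over any
`range N` with `m / 2 < N`. -/
noncomputable def gegenCoeff (lam : ℝ) (m j : ℕ) : ℝ :=
  if 2 * j ≤ m then
    (-1 : ℝ) ^ j * poch lam (m - j) / ((Nat.factorial j : ℝ) * (Nat.factorial (m - 2 * j) : ℝ))
  else 0

lemma gegenCoeff_of_lt (lam : ℝ) {m j : ℕ} (h : m < 2 * j) : gegenCoeff lam m j = 0 :=
  if_neg (by omega)

noncomputable def gegenDeriv (lam : ℝ) (m : ℕ) (x : ℝ) : ℝ :=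
  ∑ j ∈ range (m / 2 + 1),
    (-1 : ℝ) ^ j * poch lam (m - j) / ((Nat.factorial j : ℝ) * (Nat.factorial (m - 2 * j) : ℝ))
      * (2 * (m - 2 * j : ℕ) * (2 * x) ^ (m - 2 * j - 1))

lemma sum_gegenCoeff_mul (lam : ℝ) {m N : ℕ} (hN : m / 2 < N) (f : ℕ → ℝ) :
    ∑ j ∈ range N, gegenCoeff lam m j * f j =
      ∑ j ∈ range (m / 2 + 1), (-1 : ℝ) ^ j * poch lam (m - j)
        / ((Nat.factorial j : ℝ) * (Nat.factorial (m - 2 * j) : ℝ)) * f j := by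
  rw [← sum_subset (range_subset_range.mpr hN) fun j _ hj => ?_]
  · exact sum_congr rfl fun j hj => by
      rw [gegenCoeff, if_pos (by simp only [mem_range] at hj; omega)]
  · rw [gegenCoeff_of_lt _ (by simp only [mem_range] at hj; omega), zero_mul]

lemma gegen_eq_sum_gegenCoeff (lam : ℝ) {m N : ℕ} (hN : m / 2 < N) (x : ℝ) :
    gegen lam m x = ∑ j ∈ range N, gegenCoeff lam m j * (2 * x) ^ (m - 2 * j) :=
  (sum_gegenCoeff_mul lam hN _).symm

lemma gegenDeriv_eq_sum_gegenCoeff (lam : ℝ) {m N : ℕ} (hN : m / 2 < N) (x : ℝ) :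
    gegenDeriv lam m x =
      ∑ j ∈ range N, gegenCoeff lam m j * (2 * (m - 2 * j : ℕ) * (2 * x) ^ (m - 2 * j - 1)) :=
  (sum_gegenCoeff_mul lam hN _).symm

lemma hasDerivAt_gegen (lam : ℝ) (m : ℕ) (x : ℝ) :
    HasDerivAt (gegen lam m) (gegenDeriv lam m x) x := by
  have hlin : HasDerivAt (fun y : ℝ => 2 * y) 2 x := by simpa using (hasDerivAt_id x).const_mul 2
  unfold gegen gegenDeriv
  refine HasDerivAt.fun_sum fun j _ => ((hlin.pow _).const_mul _).congr_deriv ?_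
  ring

lemma continuous_gegen (lam : ℝ) (m : ℕ) : Continuous (gegen lam m) := by
  unfold gegen
  fun_prop

lemma gegen_weight_identity_coeff_zero (lam : ℝ) (m : ℕ) :
    lam * (((m : ℝ) + 2 * lam + 1) / 2 * gegenCoeff (lam + 1) m 0) =
      ((m + 1) * (m + 1 + 2 * lam) / 2) * gegenCoeff lam (m + 1) 0 := by
  simp only [gegenCoeff, zero_le, if_true, mul_zero, Nat.sub_zero, pow_zero, Nat.factorial_zero,
    Nat.factorial_succ, poch_succ_left]
  push_cast
  field_simp
  ring

lemma gegen_weight_identity_coeff_succ (lam : ℝ) (m j : ℕ) :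
    lam * (2 * (m - 2 * j : ℕ) * gegenCoeff (lam + 1) m j
        - ((m - 2 * (j + 1) : ℕ) + 2 * lam + 1) / 2 * gegenCoeff (lam + 1) m (j + 1)) =
      -((m + 1) * (m + 1 + 2 * lam) / 2) * gegenCoeff lam (m + 1) (j + 1) := by
  have hsign : (-1 : ℝ) ^ (j + 1) = -(-1) ^ j := by ring
  obtain hm | rfl | hm : m < 2 * j + 1 ∨ m = 2 * j + 1 ∨ 2 * j + 2 ≤ m := by omega
  · simp [show m - 2 * j = 0 by omega, gegenCoeff_of_lt _ (show m < 2 * (j + 1) by omega),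
      gegenCoeff_of_lt _ (show m + 1 < 2 * (j + 1) by omega)]
  · rw [gegenCoeff_of_lt _ (by omega : 2 * j + 1 < 2 * (j + 1))]
    simp only [gegenCoeff, if_pos (by omega : 2 * j ≤ 2 * j + 1),
      if_pos (by omega : 2 * (j + 1) ≤ 2 * j + 1 + 1),
      show 2 * j + 1 - j = j + 1 by omega, show 2 * j + 1 - 2 * j = 1 by omega,
      show 2 * j + 1 + 1 - (j + 1) = j + 1 by omega, show 2 * j + 1 + 1 - 2 * (j + 1) = 0 by omega,
      poch_succ_left lam, poch_succ (lam + 1), Nat.factorial_succ, Nat.factorial_zero, hsign]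
    push_cast
    field_simp
    ring
  · obtain ⟨q, rfl⟩ := Nat.exists_eq_add_of_le hm
    simp only [gegenCoeff, if_pos (by omega : 2 * j ≤ 2 * j + 2 + q),
      if_pos (by omega : 2 * (j + 1) ≤ 2 * j + 2 + q),
      if_pos (by omega : 2 * (j + 1) ≤ 2 * j + 2 + q + 1),
      show 2 * j + 2 + q - j = q + j + 1 + 1 by omega,
      show 2 * j + 2 + q - 2 * j = q + 1 + 1 by omega,
      show 2 * j + 2 + q - (j + 1) = q + j + 1 by omega,
      show 2 * j + 2 + q - 2 * (j + 1) = q by omega,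
      show 2 * j + 2 + q + 1 - (j + 1) = q + j + 1 + 1 by omega,
      show 2 * j + 2 + q + 1 - 2 * (j + 1) = q + 1 by omega,
      poch_succ_left lam, poch_succ (lam + 1), Nat.factorial_succ, hsign]
    push_cast
    field_simp
    ring

lemma gegen_weight_identity_term (lam x : ℝ) (m j : ℕ) :
    lam * ((1 - x ^ 2)
        * (gegenCoeff (lam + 1) m j * (2 * (m - 2 * j : ℕ) * (2 * x) ^ (m - 2 * j - 1)))
      - (2 * lam + 1) * x * (gegenCoeff (lam + 1) m j * (2 * x) ^ (m - 2 * j))) =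
    lam * (2 * (m - 2 * j : ℕ) * gegenCoeff (lam + 1) m j) * (2 * x) ^ (m - 2 * j - 1)
      - lam * (((m - 2 * j : ℕ) + 2 * lam + 1) / 2 * gegenCoeff (lam + 1) m j)
        * (2 * x) ^ (m + 1 - 2 * j) := by
  rcases lt_or_ge m (2 * j) with hm | hm
  · simp [gegenCoeff_of_lt _ hm]
  obtain ⟨n, hn⟩ := Nat.exists_eq_add_of_le hm
  rw [show m + 1 - 2 * j = m - 2 * j + 1 by omega, show m - 2 * j = n by omega]
  rcases n with _ | p
  · push_cast; ring
  · rw [Nat.add_sub_cancel]; push_cast; ring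

theorem gegen_weight_identity (lam x : ℝ) (m : ℕ) :
    lam * ((1 - x ^ 2) * gegenDeriv (lam + 1) m x - (2 * lam + 1) * x * gegen (lam + 1) m x) =
      -((m + 1) * (m + 1 + 2 * lam) / 2) * gegen lam (m + 1) x := by
  have hN : m / 2 < m + 1 := by omega
  rw [gegenDeriv_eq_sum_gegenCoeff _ hN, gegen_eq_sum_gegenCoeff _ hN,
    gegen_eq_sum_gegenCoeff _ (by omega : (m + 1) / 2 < m + 1), mul_sum, mul_sum,
    ← sum_sub_distrib, mul_sum, mul_sum,
    sum_congr rfl fun j _ => gegen_weight_identity_term lam x m j]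
  refine sum_range_succ_sub_shift _ _ _ m (by simp [show m - 2 * m = 0 by omega]) ?_ fun j _ => ?_
  · rw [Nat.mul_zero, Nat.sub_zero, Nat.sub_zero]
    linear_combination -(2 * x) ^ (m + 1) * gegen_weight_identity_coeff_zero lam m
  · rw [show m - 2 * j - 1 = m + 1 - 2 * (j + 1) by omega]
    linear_combination (2 * x) ^ (m + 1 - 2 * (j + 1)) * gegen_weight_identity_coeff_succ lam m j

lemma hasDerivAt_one_sub_sq_rpow_mul (μ : ℝ) {g : ℝ → ℝ} {g' x : ℝ} (hx : x ^ 2 < 1)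
    (hg : HasDerivAt g g' x) :
    HasDerivAt (fun y => (1 - y ^ 2) ^ (μ + 1 / 2) * g y)
      ((1 - x ^ 2) ^ (μ - 1 / 2) * ((1 - x ^ 2) * g' - (2 * μ + 1) * x * g x)) x := by
  have hpos : 0 < 1 - x ^ 2 := by linarith
  have hw := ((hasDerivAt_pow 2 x).const_sub 1).rpow_const (p := μ + 1 / 2) (Or.inl hpos.ne')
  refine (hw.mul hg).congr_deriv ?_
  rw [show μ + 1 / 2 - 1 = μ - 1 / 2 by ring, show μ + 1 / 2 = (μ - 1 / 2) + 1 by ring,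
    Real.rpow_add_one hpos.ne']
  push_cast
  ring

/-- The identity of the paper, multiplied through by `lam` so that it also holds at `lam = 0`. -/
theorem hasDerivAt_weighted_gegen (lam : ℝ) (m : ℕ) {x : ℝ} (hx : x ^ 2 < 1) :
    HasDerivAt (fun y => lam * ((1 - y ^ 2) ^ (lam + 1 / 2) * gegen (lam + 1) m y))
      (-((m + 1) * (m + 1 + 2 * lam) / 2) * ((1 - x ^ 2) ^ (lam - 1 / 2) * gegen lam (m + 1) x))
      x := by
  refine ((hasDerivAt_one_sub_sq_rpow_mul lam hx (hasDerivAt_gegen (lam + 1) m x)).const_mul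
    lam).congr_deriv ?_
  linear_combination (1 - x ^ 2) ^ (lam - 1 / 2) * gegen_weight_identity lam x m

lemma continuous_one_sub_sq_rpow {p : ℝ} (hp : 0 ≤ p) :
    Continuous fun x : ℝ => (1 - x ^ 2) ^ p :=
  (Real.continuous_rpow_const hp).comp (by fun_prop)

lemma intervalIntegrable_one_sub_sq_rpow_mul {r : ℝ} (hr : -1 < r) {Q : ℝ → ℝ}
    (hQ : Continuous Q) : IntervalIntegrable (fun x => (1 - x ^ 2) ^ r * Q x) volume (-1) 1 := by
  have hleft : IntervalIntegrable (fun x => (1 + x) ^ r * ((1 - x) ^ r * Q x)) volume (-1) 0 := by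
    have h := (intervalIntegrable_rpow' hr (a := 0) (b := 1)).comp_add_left 1
    norm_num at h
    refine h.mul_continuousOn (ContinuousOn.mul ?_ hQ.continuousOn)
    refine ContinuousOn.rpow_const (by fun_prop) fun x hx => Or.inl ?_
    rw [Set.uIcc_of_le (by norm_num)] at hx
    linarith [hx.2]
  have hright : IntervalIntegrable (fun x => (1 - x) ^ r * ((1 + x) ^ r * Q x)) volume 0 1 := by
    have h := ((intervalIntegrable_rpow' hr (a := 0) (b := 1)).comp_sub_left 1).symm
    norm_num at h
    refine h.mul_continuousOn (ContinuousOn.mul ?_ hQ.continuousOn)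
    refine ContinuousOn.rpow_const (by fun_prop) fun x hx => Or.inl ?_
    rw [Set.uIcc_of_le (by norm_num)] at hx
    linarith [hx.1]
  refine (hleft.congr fun x hx => ?_).trans (hright.congr fun x hx => ?_)
  · rw [Set.uIoc_of_le (by norm_num)] at hx
    rw [← mul_assoc, ← Real.mul_rpow (by linarith [hx.1]) (by linarith [hx.2])]
    ring_nf
  · rw [Set.uIoc_of_le (by norm_num)] at hx
    rw [← mul_assoc, ← Real.mul_rpow (by linarith [hx.2]) (by linarith [hx.1])]
    ring_nf

/-- Integrating `(s - x) d/dx [(1 - x²)^(λ+1/2) C_(k-1)^(λ+1)(x)]` by parts, and then the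
resulting `(1 - x²)^(λ+1/2) C_(k-1)^(λ+1)(x)` once more by `hasDerivAt_weighted_gegen`, gives
this primitive. -/
noncomputable def gegenOneSidedPrimitive (lam s : ℝ) (k : ℕ) (x : ℝ) : ℝ :=
  -2 / (k * (k + 2 * lam)) *
      ((s - x) * (lam * ((1 - x ^ 2) ^ (lam + 1 / 2) * gegen (lam + 1) (k - 1) x)))
    + 4 * lam / ((k - 1) * k * (k + 2 * lam) * (k + 2 * lam + 1))
      * ((lam + 1) * ((1 - x ^ 2) ^ (lam + 3 / 2) * gegen (lam + 2) (k - 2) x))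

section OneSided

variable {lam : ℝ} (s : ℝ) {k : ℕ}

theorem hasDerivAt_gegenOneSidedPrimitive (hlam : -1 / 2 < lam) (hk : 2 ≤ k) {x : ℝ}
    (hx : x ^ 2 < 1) :
    HasDerivAt (gegenOneSidedPrimitive lam s k)
      ((s - x) * (1 - x ^ 2) ^ (lam - 1 / 2) * gegen lam k x) x := by
  have hk' : (2 : ℝ) ≤ k := by exact_mod_cast hk
  have hG := hasDerivAt_weighted_gegen lam (k - 1) hx
  have hF := hasDerivAt_weighted_gegen (lam + 1) (k - 2) hx
  rw [Nat.sub_add_cancel (by omega), Nat.cast_sub (by omega)] at hG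
  rw [show k - 2 + 1 = k - 1 by omega, Nat.cast_sub hk, show lam + 1 + 1 / 2 = lam + 3 / 2 by ring,
    show lam + 1 + 1 = lam + 2 by ring, show lam + 1 - 1 / 2 = lam + 1 / 2 by ring] at hF
  refine (((((hasDerivAt_id' x).const_sub s).fun_mul hG).const_mul _).fun_add
    (hF.const_mul _)).congr_deriv ?_
  have : (k : ℝ) + 2 * lam ≠ 0 := by linarith
  have : (k : ℝ) + 2 * lam + 1 ≠ 0 := by linarith
  have : (k : ℝ) - 1 ≠ 0 := by linarith
  have : (k : ℝ) ≠ 0 := by linarith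
  field_simp
  ring

theorem continuous_gegenOneSidedPrimitive (hlam : -1 / 2 < lam) :
    Continuous (gegenOneSidedPrimitive lam s k) := by
  have := continuous_one_sub_sq_rpow (p := lam + 1 / 2) (by linarith)
  have := continuous_one_sub_sq_rpow (p := lam + 3 / 2) (by linarith)
  have := continuous_gegen (lam + 1) (k - 1)
  have := continuous_gegen (lam + 2) (k - 2)
  unfold gegenOneSidedPrimitive
  fun_prop

theorem gegenOneSidedPrimitive_eq_zero (hlam : -1 / 2 < lam) {x : ℝ} (hx : x ^ 2 = 1) :
    gegenOneSidedPrimitive lam s k x = 0 := by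
  have hw : ∀ p : ℝ, 0 < p → (1 - x ^ 2) ^ p = 0 := fun p hp => by
    rw [hx, sub_self, Real.zero_rpow hp.ne']
  simp only [gegenOneSidedPrimitive, hw (lam + 1 / 2) (by linarith),
    hw (lam + 3 / 2) (by linarith), zero_mul, mul_zero, add_zero]

theorem integral_eq_gegenOneSidedPrimitive_sub (hlam : -1 / 2 < lam) (hk : 2 ≤ k) {a b : ℝ}
    (ha : -1 ≤ a) (hab : a ≤ b) (hb : b ≤ 1) :
    ∫ x in a..b, (s - x) * (1 - x ^ 2) ^ (lam - 1 / 2) * gegen lam k x =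
      gegenOneSidedPrimitive lam s k b - gegenOneSidedPrimitive lam s k a := by
  refine integral_eq_sub_of_hasDerivAt_of_le hab
    (continuous_gegenOneSidedPrimitive s hlam).continuousOn
    (fun x hx => hasDerivAt_gegenOneSidedPrimitive s hlam hk (by nlinarith [hx.1, hx.2])) ?_
  have h := intervalIntegrable_one_sub_sq_rpow_mul (by linarith : -1 < lam - 1 / 2)
    (Q := fun x => (s - x) * gegen lam k x) (by have := continuous_gegen lam k; fun_prop)
  refine (h.mono_set ?_).congr fun x _ => by ring
  rw [Set.uIcc_of_le hab, Set.uIcc_of_le (by norm_num)]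
  exact Set.Icc_subset_Icc ha hb

end OneSided

theorem gegenbauer_onesided_integrals (lam s : ℝ) (hlam : -1/2 < lam)
    (hs : -1 < s) (hs' : s < 1) (k : ℕ) (hk : 2 ≤ k) :
    (∫ x in (-1:ℝ)..s, (s - x) * (1 - x^2) ^ (lam - 1/2) * gegen lam k x
        = ∫ x in s..(1:ℝ), (x - s) * (1 - x^2) ^ (lam - 1/2) * gegen lam k x) ∧
    (∫ x in s..(1:ℝ), (x - s) * (1 - x^2) ^ (lam - 1/2) * gegen lam k x
        = 4*lam*(lam + 1)
            / (((k:ℝ) - 1)*(k:ℝ)*((k:ℝ) + 2*lam)*((k:ℝ) + 2*lam + 1))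
          * (1 - s^2) ^ (lam + 3/2) * gegen (lam + 2) (k - 2) s) := by
  have hleft : ∫ x in (-1:ℝ)..s, (s - x) * (1 - x^2) ^ (lam - 1/2) * gegen lam k x =
      gegenOneSidedPrimitive lam s k s := by
    rw [integral_eq_gegenOneSidedPrimitive_sub s hlam hk le_rfl hs.le hs'.le,
      gegenOneSidedPrimitive_eq_zero s hlam (x := -1) (by norm_num), sub_zero]
  have hright : ∫ x in s..(1:ℝ), (x - s) * (1 - x^2) ^ (lam - 1/2) * gegen lam k x =
      gegenOneSidedPrimitive lam s k s := by
    simp_rw [← neg_sub s, neg_mul]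
    rw [intervalIntegral.integral_neg,
      integral_eq_gegenOneSidedPrimitive_sub s hlam hk hs.le hs'.le le_rfl,
      gegenOneSidedPrimitive_eq_zero s hlam (by norm_num), zero_sub, neg_neg]
  refine ⟨hleft.trans hright.symm, hright.trans ?_⟩
  simp only [gegenOneSidedPrimitive, sub_self, mul_zero, zero_mul, zero_add]
  ring
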